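/- Let M = (E, rk, m) be a quasi-arithmetic matroid and let (X,Y) be a molecule with decomposition Y = X ⊔ T ⊔ F. If (B₁, B₂) ∈ B_{(X,Y)} and (B₃, B₄) = ( (B₁ ∖ X) ∪ (B₂ ∩ (X ∪ T)), (B₂ ∖ (X ∪ T)) ∪ (B₁ ∩ X) ), then m(B₁)·m(B₂) = m(B₃)·m(B₄). -/

import Mathlib

open scoped Classical

section Arithmat

variable {E : Type*} [Fintype E] [DecidableEq E]

/-- The rank function axioms of a matroid on ground set `E`. -/
def IsRankFn (rk : Finset E → ℕ) : Prop :=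
  (∀ X : Finset E, rk X ≤ X.card) ∧
  (∀ X Y : Finset E, rk (X ∪ Y) + rk (X ∩ Y) ≤ rk X + rk Y) ∧
  (∀ (X : Finset E) (e : E), rk X ≤ rk (insert e X) ∧ rk (insert e X) ≤ rk X + 1)

/-- `B` is a basis of the matroid: `|B| = rk B = rk E`. -/
def IsBasis (rk : Finset E → ℕ) (B : Finset E) : Prop :=
  B.card = rk B ∧ rk B = rk (Finset.univ : Finset E)

/-- `(X, X ⊔ T ⊔ F)` is a molecule: `X`, `T`, `F` are pairwise disjoint and
`rk Z = rk X + |Z ∩ F|` for every `Z` with `X ⊆ Z ⊆ X ∪ T ∪ F`. -/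
def IsMolecule (rk : Finset E → ℕ) (X T F : Finset E) : Prop :=
  Disjoint X T ∧ Disjoint X F ∧ Disjoint T F ∧
  ∀ Z : Finset E, X ⊆ Z → Z ⊆ X ∪ T ∪ F → rk Z = rk X + (Z ∩ F).card

/-- Axiom (A1) of (quasi-)arithmetic matroids. -/
def AxiomA1 (rk m : Finset E → ℕ) : Prop :=
  ∀ (X : Finset E) (e : E),
    (rk (insert e X) = rk X → m (insert e X) ∣ m X) ∧
    (rk (insert e X) ≠ rk X → m X ∣ m (insert e X))

/-- Axiom (A2) of (quasi-)arithmetic matroids. -/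
def AxiomA2 (rk m : Finset E → ℕ) : Prop :=
  ∀ X T F : Finset E, IsMolecule rk X T F →
    m X * m (X ∪ T ∪ F) = m (X ∪ T) * m (X ∪ F)

/-- Axiom (P) of arithmetic matroids.  The sign `(-1) ^ (|X ∪ F| - |S|)` is
expressed as `(-1) ^ (|X ∪ F| + |S|)`, which has the same parity. -/
def AxiomP (rk m : Finset E → ℕ) : Prop :=
  ∀ X T F : Finset E, IsMolecule rk X T F →
    0 ≤ ∑ S ∈ Finset.Icc X (X ∪ T ∪ F), (-1 : ℤ) ^ ((X ∪ F).card + S.card) * (m S : ℤ)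

/-- A quasi-arithmetic matroid: a matroid rank function together with a positive
multiplicity function satisfying (A1) and (A2). -/
def IsQuasiArithmeticMatroid (rk m : Finset E → ℕ) : Prop :=
  IsRankFn rk ∧ (∀ X : Finset E, 0 < m X) ∧ AxiomA1 rk m ∧ AxiomA2 rk m

/-- An arithmetic matroid: a matroid rank function together with a positive
multiplicity function satisfying (A1), (A2) and (P). -/
def IsArithmeticMatroid (rk m : Finset E → ℕ) : Prop :=
  IsRankFn rk ∧ (∀ X : Finset E, 0 < m X) ∧ AxiomA1 rk m ∧ AxiomA2 rk m ∧ AxiomP rk m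

/-- The gcd property: `m X = gcd { m I : I ⊆ X, |I| = rk I = rk X }`. -/
def GcdProperty (rk m : Finset E → ℕ) : Prop :=
  ∀ X : Finset E,
    m X = (X.powerset.filter (fun I => I.card = rk I ∧ rk I = rk X)).gcd m

/-- The strong gcd property: `m X = gcd { m B : B basis, |B ∩ X| = rk X }`. -/
def StrongGcdProperty (rk m : Finset E → ℕ) : Prop :=
  ∀ X : Finset E,
    m X = ((Finset.univ : Finset (Finset E)).filter
      (fun B => IsBasis rk B ∧ (B ∩ X).card = rk X)).gcd m

/-- The rank function of the dual matroid: `rk* X = |X| - rk E + rk (E \ X)`. -/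
def dualRk (rk : Finset E → ℕ) : Finset E → ℕ :=
  fun X => X.card + rk Xᶜ - rk (Finset.univ : Finset E)

/-- The multiplicity function of the dual arithmetic matroid: `m* X = m (E \ X)`. -/
def dualM (m : Finset E → ℕ) : Finset E → ℕ := fun X => m Xᶜ

/-- The set of bases of the matroid, as a `Finset`. -/
noncomputable def basesFinset (rk : Finset E → ℕ) : Finset (Finset E) :=
  (Finset.univ : Finset (Finset E)).filter (IsBasis rk)

/-- The multiplicity function of the reduction:
`m̄ X = gcd { m B : B basis, rk X = |X ∩ B| } / gcd { m B : B basis }`. -/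
noncomputable def reducedM (rk m : Finset E → ℕ) : Finset E → ℕ := fun X =>
  ((basesFinset rk).filter (fun B => (X ∩ B).card = rk X)).gcd m /
    (basesFinset rk).gcd m

/-- `B_(X,Y)`: the set of pairs `(B₁, B₂)` of bases with `rk X = |X ∩ B₁|` and
`rk Y = |Y ∩ B₂|`. -/
def BasisPairs (rk : Finset E → ℕ) (X Y : Finset E) : Set (Finset E × Finset E) :=
  {p | IsBasis rk p.1 ∧ IsBasis rk p.2 ∧ rk X = (X ∩ p.1).card ∧ rk Y = (Y ∩ p.2).card}

end Arithmat

section AuxLemmas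

variable {E : Type*} [Fintype E] [DecidableEq E] {rk : Finset E → ℕ}

lemma rk_le_union (hrk : IsRankFn rk) (A S : Finset E) : rk A ≤ rk (A ∪ S) := by
  induction S using Finset.induction_on with
  | empty => simp
  | insert e S he ih =>
    rw [Finset.union_insert]
    exact le_trans ih (hrk.2.2 (A ∪ S) e).1

lemma rk_mono (hrk : IsRankFn rk) {A B : Finset E} (h : A ⊆ B) : rk A ≤ rk B := by
  have := rk_le_union hrk A B
  rwa [Finset.union_eq_right.mpr h] at this

lemma rk_union_le_card (hrk : IsRankFn rk) (A S : Finset E) :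
    rk (A ∪ S) ≤ rk A + S.card := by
  induction S using Finset.induction_on with
  | empty => simp
  | insert e S he ih =>
    rw [Finset.union_insert, Finset.card_insert_of_notMem he]
    have := (hrk.2.2 (A ∪ S) e).2
    omega

lemma indep_subset (hrk : IsRankFn rk) {I J : Finset E} (hI : rk I = I.card)
    (hJI : J ⊆ I) : rk J = J.card := by
  have h1 : rk J ≤ J.card := hrk.1 J
  have h2 : J ∪ (I \ J) = I := Finset.union_sdiff_of_subset hJI
  have h3 : rk I ≤ rk J + (I \ J).card := by
    have := rk_union_le_card hrk J (I \ J)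
    rwa [h2] at this
  have h4 : (I \ J).card = I.card - J.card := Finset.card_sdiff_of_subset hJI
  have h5 : J.card ≤ I.card := Finset.card_le_card hJI
  omega

lemma rk_spanning (hrk : IsRankFn rk) {A B : Finset E} (S : Finset E)
    (h : rk (A ∪ B) = rk A) : rk (A ∪ B ∪ S) = rk (A ∪ S) := by
  have sub := hrk.2.1 (A ∪ B) (A ∪ S)
  have e1 : (A ∪ B) ∪ (A ∪ S) = A ∪ B ∪ S := by
    ext a; simp [Finset.mem_union]; tauto
  have e2 : A ⊆ (A ∪ B) ∩ (A ∪ S) :=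
    Finset.subset_inter Finset.subset_union_left Finset.subset_union_left
  have e3 : rk A ≤ rk ((A ∪ B) ∩ (A ∪ S)) := rk_mono hrk e2
  have e4 : rk (A ∪ S) ≤ rk (A ∪ B ∪ S) :=
    rk_mono hrk (Finset.union_subset_union_left Finset.subset_union_left)
  rw [e1] at sub
  omega

/-- The key rank computation: if `P`, `R` are independent subsets of `X ∪ T`
of full rank `rk X = rk (X ∪ T)`, `C` is disjoint from `X ∪ T` and `R ∪ C` is
independent, then every `Z` between `P` and `(X ∪ T) ∪ C` has
`rk Z = rk X + |Z ∩ C|`. -/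
lemma key_rank (hrk : IsRankFn rk) {X T P R C : Finset E}
    (hXT : rk (X ∪ T) = rk X)
    (hP : P ⊆ X ∪ T) (hPc : P.card = rk X) (hPr : rk P = rk X)
    (hR : R ⊆ X ∪ T) (hRc : R.card = rk X)
    (hC : Disjoint C (X ∪ T))
    (hRC : rk (R ∪ C) = (R ∪ C).card) :
    ∀ Z, P ⊆ Z → Z ⊆ (X ∪ T) ∪ C → rk Z = rk X + (Z ∩ C).card := by
  intro Z hPZ hZsub
  set S : Finset E := Z ∩ C with hS
  have hSC : S ⊆ C := Finset.inter_subset_right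
  have hRr : rk R = rk X := by
    have := indep_subset hrk hRC (Finset.subset_union_left)
    omega
  have hdisjRS : Disjoint R S :=
    Finset.disjoint_left.mpr fun a haR haS =>
      Finset.disjoint_left.mp hC (hSC haS) (hR haR)
  have hRS_indep : rk (R ∪ S) = (R ∪ S).card :=
    indep_subset hrk hRC (Finset.union_subset_union_right hSC)
  have hRScard : (R ∪ S).card = rk X + S.card := by
    rw [Finset.card_union_of_disjoint hdisjRS, hRc]
  -- rank of (X ∪ T) ∪ S
  have hXTS : rk ((X ∪ T) ∪ S) = rk X + S.card := by
    have h1 : rk (R ∪ (X ∪ T)) = rk R := by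
      rw [Finset.union_eq_right.mpr hR, hXT, hRr]
    have h2 := rk_spanning hrk S h1
    rw [Finset.union_eq_right.mpr hR] at h2
    rw [h2, hRS_indep, hRScard]
  -- rank of P ∪ S
  have hPS : rk (P ∪ S) = rk X + S.card := by
    have h1 : rk (P ∪ (X ∪ T)) = rk P := by
      rw [Finset.union_eq_right.mpr hP, hXT, hPr]
    have h2 := rk_spanning hrk S h1
    rw [Finset.union_eq_right.mpr hP] at h2
    rw [← h2, hXTS]
  -- sandwich
  have hlow : rk (P ∪ S) ≤ rk Z :=
    rk_mono hrk (Finset.union_subset hPZ Finset.inter_subset_left)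
  have hZXTS : Z ⊆ (X ∪ T) ∪ S := by
    intro a ha
    rcases Finset.mem_union.mp (hZsub ha) with h | h
    · exact Finset.mem_union_left _ h
    · exact Finset.mem_union_right _ (Finset.mem_inter.mpr ⟨ha, h⟩)
  have hhigh : rk Z ≤ rk ((X ∪ T) ∪ S) := rk_mono hrk hZXTS
  omega

/-- Key multiplicity identity derived from (A2) on the molecule
`(P, P ∪ (Q \ P) ∪ C)`. -/
lemma key_mult {m : Finset E → ℕ} (hrk : IsRankFn rk) (hA2 : AxiomA2 rk m)
    {X T P Q R C : Finset E}
    (hXT : rk (X ∪ T) = rk X)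
    (hP : P ⊆ X ∪ T) (hPc : P.card = rk X) (hPr : rk P = rk X)
    (hQ : Q ⊆ X ∪ T)
    (hR : R ⊆ X ∪ T) (hRc : R.card = rk X)
    (hC : Disjoint C (X ∪ T))
    (hRC : rk (R ∪ C) = (R ∪ C).card) :
    m P * m (P ∪ Q ∪ C) = m (P ∪ Q) * m (P ∪ C) := by
  have hmol : IsMolecule rk P (Q \ P) C := by
    refine ⟨Finset.disjoint_sdiff, ?_, ?_, ?_⟩
    · exact (Finset.disjoint_of_subset_right hP hC).symm
    · exact (Finset.disjoint_of_subset_right (Finset.sdiff_subset.trans hQ) hC).symm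
    · intro Z hPZ hZsub
      refine key_rank hrk hXT hP hPc hPr hR hRc hC hRC Z hPZ ?_ |>.trans ?_
      · refine hZsub.trans ?_
        refine Finset.union_subset_union ?_ (subset_refl C)
        exact Finset.union_subset hP (Finset.sdiff_subset.trans hQ)
      · rw [hPr]
  have := hA2 P (Q \ P) C hmol
  rwa [Finset.union_sdiff_self_eq_union] at this

end AuxLemmas

/-- Let `M = (E, rk, m)` be a quasi-arithmetic matroid and `(X, Y)`
a molecule with decomposition `Y = X ⊔ T ⊔ F`.  If `(B₁, B₂) ∈ B_(X,Y)` and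
`(B₃, B₄) = ((B₁ \ X) ∪ (B₂ ∩ (X ∪ T)), (B₂ \ (X ∪ T)) ∪ (B₁ ∩ X))`, then
`m B₁ * m B₂ = m B₃ * m B₄`. -/
theorem molecule_basisPairs_mult_product
    {E : Type*} [Fintype E] [DecidableEq E]
    (rk m : Finset E → ℕ) (hM : IsQuasiArithmeticMatroid rk m)
    (X T F : Finset E) (hmol : IsMolecule rk X T F)
    (B₁ B₂ : Finset E) (hB : (B₁, B₂) ∈ BasisPairs rk X (X ∪ T ∪ F)) :
    m B₁ * m B₂ =
      m ((B₁ \ X) ∪ (B₂ ∩ (X ∪ T))) * m ((B₂ \ (X ∪ T)) ∪ (B₁ ∩ X)) := by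
  obtain ⟨hrk, hpos, _, hA2⟩ := hM
  obtain ⟨hXT, hXF, hTF, hform⟩ := hmol
  obtain ⟨hB₁, hB₂, hX1, hY2⟩ := hB
  simp only at hB₁ hB₂ hX1 hY2
  set r := rk X with hr
  set A₁ : Finset E := X ∩ B₁ with hA₁
  set D : Finset E := B₂ ∩ (X ∪ T) with hD
  set C₁ : Finset E := B₁ \ X with hC₁
  set C₂ : Finset E := B₂ \ (X ∪ T) with hC₂
  set Y : Finset E := X ∪ T ∪ F with hY
  -- basic ranks
  have hFsub : F ⊆ Y := Finset.subset_union_right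
  have hXTF_empty : (X ∪ T) ∩ F = ∅ := by
    rw [Finset.union_inter_distrib_right, Finset.disjoint_iff_inter_eq_empty.mp hXF,
      Finset.disjoint_iff_inter_eq_empty.mp hTF, Finset.union_empty]
  have hrkXT : rk (X ∪ T) = r := by
    have := hform (X ∪ T) Finset.subset_union_left Finset.subset_union_left
    rwa [hXTF_empty, Finset.card_empty, Nat.add_zero] at this
  have hrkY : rk Y = r + F.card := by
    have := hform Y (Finset.subset_union_left.trans Finset.subset_union_left)
      (subset_refl Y)
    rwa [Finset.inter_eq_right.mpr hFsub] at this
  -- A₁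
  have hA₁sub : A₁ ⊆ X ∪ T := Finset.inter_subset_left.trans Finset.subset_union_left
  have hA₁card : A₁.card = r := hX1.symm
  have hA₁rk : rk A₁ = r := by
    have := indep_subset hrk hB₁.1.symm (Finset.inter_subset_right : X ∩ B₁ ⊆ B₁)
    rw [this, hA₁card]
  -- F ⊆ B₂ and |D| = r
  have hYB₂ : rk (Y ∩ B₂) = (Y ∩ B₂).card :=
    indep_subset hrk hB₂.1.symm Finset.inter_subset_right
  have hYB₂card : (Y ∩ B₂).card = r + F.card := by rw [← hY2, hrkY]
  have hFB₂ : F ⊆ B₂ := by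
    set Z : Finset E := X ∪ (Y ∩ B₂) with hZ
    have hZsub : Z ⊆ Y := Finset.union_subset
      (Finset.subset_union_left.trans Finset.subset_union_left)
      Finset.inter_subset_left
    have hZform : rk Z = r + (Z ∩ F).card := hform Z Finset.subset_union_left hZsub
    have h1 : rk (Y ∩ B₂) ≤ rk Z := rk_mono hrk Finset.subset_union_right
    have h2 : rk Z ≤ rk Y := rk_mono hrk hZsub
    have h3 : (Z ∩ F).card = F.card := by
      rw [hYB₂, hYB₂card] at h1; rw [hrkY] at h2; omega
    have h4 : Z ∩ F = F :=
      Finset.eq_of_subset_of_card_le Finset.inter_subset_right (le_of_eq h3.symm)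
    intro a haF
    have haZF : a ∈ Z ∩ F := by rw [h4]; exact haF
    have haZ : a ∈ Z := (Finset.mem_inter.mp haZF).1
    rcases Finset.mem_union.mp haZ with h | h
    · exact absurd haF (Finset.disjoint_left.mp hXF h)
    · exact (Finset.mem_inter.mp h).2
  have hYB₂eq : Y ∩ B₂ = D ∪ F := by
    ext a
    simp only [hY, hD, Finset.mem_inter, Finset.mem_union]
    constructor
    · rintro ⟨h1 | h2, hb⟩
      · exact Or.inl ⟨hb, h1⟩
      · exact Or.inr h2
    · rintro (⟨hb, h⟩ | hf)
      · exact ⟨Or.inl h, hb⟩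
      · exact ⟨Or.inr hf, hFB₂ hf⟩
  have hDF : Disjoint D F := by
    refine Finset.disjoint_left.mpr fun a ha haF => ?_
    have h1 : a ∈ (X ∪ T) ∩ F :=
      Finset.mem_inter.mpr ⟨(Finset.mem_inter.mp ha).2, haF⟩
    rw [hXTF_empty] at h1
    exact absurd h1 (Finset.notMem_empty a)
  have hDcard : D.card = r := by
    have := Finset.card_union_of_disjoint hDF
    rw [← hYB₂eq, hYB₂card] at this
    omega
  have hDsub : D ⊆ X ∪ T := Finset.inter_subset_right
  have hDrk : rk D = r := by
    have := indep_subset hrk hB₂.1.symm (Finset.inter_subset_left : B₂ ∩ (X ∪ T) ⊆ B₂)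
    rw [this, hDcard]
  -- independence facts
  have hA₁C₁ : A₁ ∪ C₁ = B₁ := by
    rw [hA₁, hC₁, Finset.inter_comm, Finset.union_comm, Finset.sdiff_union_inter]
  have hDC₂ : D ∪ C₂ = B₂ := by
    rw [hD, hC₂, Finset.union_comm, Finset.sdiff_union_inter]
  have hB₁indep : rk (A₁ ∪ C₁) = (A₁ ∪ C₁).card := by rw [hA₁C₁]; exact hB₁.1.symm
  have hB₂indep : rk (D ∪ C₂) = (D ∪ C₂).card := by rw [hDC₂]; exact hB₂.1.symm
  -- C₂ disjoint from X ∪ T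
  have hC₂disj : Disjoint C₂ (X ∪ T) := Finset.sdiff_disjoint
  -- B₁ ∩ T = ∅, hence C₁ disjoint from X ∪ T
  have hB₁T : B₁ ∩ T = ∅ := by
    have hJ : rk (B₁ ∩ (X ∪ T)) = (B₁ ∩ (X ∪ T)).card :=
      indep_subset hrk hB₁.1.symm Finset.inter_subset_left
    have hJle : rk (B₁ ∩ (X ∪ T)) ≤ r := by
      rw [← hrkXT]; exact rk_mono hrk Finset.inter_subset_right
    have hsplit : B₁ ∩ (X ∪ T) = A₁ ∪ (B₁ ∩ T) := by
      ext a
      simp only [hA₁, Finset.mem_inter, Finset.mem_union]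
      tauto
    have hdisj : Disjoint A₁ (B₁ ∩ T) := by
      refine Finset.disjoint_left.mpr fun a ha hb => ?_
      exact Finset.disjoint_left.mp hXT (Finset.mem_inter.mp ha).1
        (Finset.mem_inter.mp hb).2
    have hcard : (B₁ ∩ (X ∪ T)).card = r + (B₁ ∩ T).card := by
      rw [hsplit, Finset.card_union_of_disjoint hdisj, hA₁card]
    have : (B₁ ∩ T).card = 0 := by omega
    exact Finset.card_eq_zero.mp this
  have hC₁disj : Disjoint C₁ (X ∪ T) := by
    rw [Finset.disjoint_union_right]
    refine ⟨Finset.sdiff_disjoint, ?_⟩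
    refine Finset.disjoint_left.mpr fun a ha hT => ?_
    have haB₁ : a ∈ B₁ := (Finset.mem_sdiff.mp ha).1
    have : a ∈ B₁ ∩ T := Finset.mem_inter.mpr ⟨haB₁, hT⟩
    rw [hB₁T] at this
    exact absurd this (Finset.notMem_empty a)
  -- the four applications of key_mult
  have e1 : m D * m (D ∪ A₁ ∪ C₂) = m (D ∪ A₁) * m (D ∪ C₂) :=
    key_mult hrk hA2 hrkXT hDsub hDcard hDrk hA₁sub hDsub hDcard hC₂disj hB₂indep
  have e2 : m A₁ * m (A₁ ∪ D ∪ C₂) = m (A₁ ∪ D) * m (A₁ ∪ C₂) :=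
    key_mult hrk hA2 hrkXT hA₁sub hA₁card hA₁rk hDsub hDsub hDcard hC₂disj hB₂indep
  have e3 : m A₁ * m (A₁ ∪ D ∪ C₁) = m (A₁ ∪ D) * m (A₁ ∪ C₁) :=
    key_mult hrk hA2 hrkXT hA₁sub hA₁card hA₁rk hDsub hA₁sub hA₁card hC₁disj hB₁indep
  have e4 : m D * m (D ∪ A₁ ∪ C₁) = m (D ∪ A₁) * m (D ∪ C₁) :=
    key_mult hrk hA2 hrkXT hDsub hDcard hDrk hA₁sub hA₁sub hA₁card hC₁disj hB₁indep
  -- normalize set unions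
  have u1 : D ∪ A₁ = A₁ ∪ D := Finset.union_comm _ _
  have u2 : D ∪ A₁ ∪ C₂ = A₁ ∪ D ∪ C₂ := by rw [u1]
  have u3 : D ∪ A₁ ∪ C₁ = A₁ ∪ D ∪ C₁ := by rw [u1]
  rw [u2, u1, hDC₂] at e1
  rw [u3, u1] at e4
  rw [hA₁C₁] at e3
  -- goal rewriting
  have g1 : (B₁ \ X) ∪ (B₂ ∩ (X ∪ T)) = D ∪ C₁ := by
    rw [hC₁, hD, Finset.union_comm]
  have g2 : (B₂ \ (X ∪ T)) ∪ (B₁ ∩ X) = A₁ ∪ C₂ := by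
    rw [hC₂, hA₁, Finset.inter_comm B₁ X, Finset.union_comm]
  rw [g1, g2]
  -- final algebra
  set K := m (A₁ ∪ D)
  set mU := m (A₁ ∪ D ∪ C₂)
  set mV := m (A₁ ∪ D ∪ C₁)
  have key : K * K * (m B₁ * m B₂) = K * K * (m (D ∪ C₁) * m (A₁ ∪ C₂)) := by
    have t1 : (m A₁ * mV) * (m D * mU) = K * K * (m B₁ * m B₂) := by
      rw [e3, e1]; ring
    have t2 : (m D * mV) * (m A₁ * mU) = K * K * (m (D ∪ C₁) * m (A₁ ∪ C₂)) := by
      rw [e4, e2]; ring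
    have t3 : (m A₁ * mV) * (m D * mU) = (m D * mV) * (m A₁ * mU) := by ring
    exact t1.symm.trans (t3.trans t2)
  have hKpos : 0 < K * K := Nat.mul_pos (hpos _) (hpos _)
  exact Nat.eq_of_mul_eq_mul_left hKpos key
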